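/- arXiv:2406.15158 — 5 statements merged into one kernel-verified Lean document; each statement's English description precedes it below -/
import Mathlib

section
/- Let N ∈ SL(2,ℤ) with Tr(N) = θ ≥ 3, and suppose N has a real eigenvalue α > 1 with eigenvector a ∈ ℝ² \ {0}, and let δ := det(I₂ − N) = 2 − θ. If k ∈ δℤ², then k (I₂−N)⁻¹ (n₁₁n₁₂ − k₂, n₂₁n₂₂ + k₁)ᵗ + k₁k₂ ∈ 2ℤ. -/
/-!
Because $\det(I - N) = 1 - \operatorname{tr} N + \det N = \delta$, the inverse $(I - N)^{-1}$ is
$\delta^{-1} \operatorname{adj}(I - N)$, so for $k = \delta l$ the expression is the integer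
$l \cdot \operatorname{adj}(I - N)\, w + k_1 k_2$. Its parity depends only on the entries of $N$ and
$l$ modulo $2$, and running through the residues with $\det N \equiv 1$ shows that it is even.
-/

open Matrix

theorem Matrix.det_one_sub_fin_two {R : Type*} [CommRing R] (N : Matrix (Fin 2) (Fin 2) R) :
    (1 - N).det = 1 - N.trace + N.det := by
  simp only [det_fin_two, trace_fin_two, sub_apply, one_apply_eq, one_apply_ne, ne_eq,
    zero_ne_one, one_ne_zero, not_false_eq_true]
  ring

theorem Matrix.intCast_det_smul_dotProduct_inv_mulVec {n : Type*} [Fintype n] [DecidableEq n]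
    (M : Matrix n n ℤ) (hM : M.det ≠ 0) (l w : n → ℤ) :
    (fun i => ((M.det • l) i : ℚ)) ⬝ᵥ ((M.map (Int.cast : ℤ → ℚ))⁻¹ *ᵥ fun i => (w i : ℚ)) =
      ((l ⬝ᵥ (M.adjugate *ᵥ w) : ℤ) : ℚ) := by
  have hdet : (M.map (Int.cast : ℤ → ℚ)).det = M.det := (Int.castRingHom ℚ).map_det M |>.symm
  have hadj : (M.map (Int.cast : ℤ → ℚ)).adjugate = M.adjugate.map Int.cast :=
    ((Int.castRingHom ℚ).map_adjugate M).symm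
  have hcast : (fun i => ((M.det • l) i : ℚ)) =
      (M.map (Int.cast : ℤ → ℚ)).det • fun i => (l i : ℚ) := by
    ext i; simp [hdet]
  rw [hcast, inv_def, Ring.inverse_eq_inv', smul_mulVec, smul_dotProduct, dotProduct_smul, smul_smul,
    mul_inv_cancel₀ (by rwa [hdet, Int.cast_ne_zero]), one_smul, hadj]
  simp [dotProduct, mulVec]

theorem Matrix.even_dotProduct_adjugate_one_sub_mulVec_add (N : Matrix (Fin 2) (Fin 2) ℤ)
    (hN : N.det = 1) (l k : Fin 2 → ℤ) (hk : k = (1 - N).det • l) :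
    Even (l ⬝ᵥ ((1 - N).adjugate *ᵥ ![N 0 0 * N 0 1 - k 1, N 1 0 * N 1 1 + k 0]) + k 0 * k 1) := by
  rw [← ZMod.intCast_eq_zero_iff_even]
  have hN2 := congrArg (Int.cast : ℤ → ZMod 2) hN
  simp only [hk, det_fin_two, adjugate_fin_two, dotProduct, mulVec, Fin.sum_univ_two, sub_apply,
    one_apply_eq, one_apply_ne, ne_eq, zero_ne_one, one_ne_zero, not_false_eq_true, of_apply,
    cons_val', cons_val_fin_one, cons_val_zero, cons_val_one, Pi.smul_apply, smul_eq_mul,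
    Int.cast_add, Int.cast_sub, Int.cast_mul, Int.cast_neg, Int.cast_one] at hN2 ⊢
  revert hN2
  generalize (N 0 0 : ZMod 2) = a
  generalize (N 0 1 : ZMod 2) = b
  generalize (N 1 0 : ZMod 2) = c
  generalize (N 1 1 : ZMod 2) = d
  generalize (l 0 : ZMod 2) = u
  generalize (l 1 : ZMod 2) = v
  revert a b c d u v
  decide

theorem stmt9_general (N : Matrix (Fin 2) (Fin 2) ℤ) (θ : ℤ)
    (hdet : N.det = 1) (htr : N.trace = θ)
    (k : Fin 2 → ℤ) (hk : ∃ l : Fin 2 → ℤ, k = (2 - θ) • l) :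
    ∃ m : ℤ,
      (fun i => (k i : ℚ)) ⬝ᵥ
          ((1 - N.map (Int.cast : ℤ → ℚ))⁻¹.mulVec
            ![((N 0 0 * N 0 1 - k 1 : ℤ) : ℚ), ((N 1 0 * N 1 1 + k 0 : ℤ) : ℚ)])
        + ((k 0 * k 1 : ℤ) : ℚ) = 2 * (m : ℚ) := by
  obtain ⟨l, hl⟩ := hk
  have hδ : (1 - N).det = 2 - θ := by rw [det_one_sub_fin_two, hdet, htr]; ring
  rcases eq_or_ne θ 2 with rfl | hθ
  · exact ⟨0, by simp [hl]⟩
  rw [← hδ] at hl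
  obtain ⟨m, hm⟩ := even_dotProduct_adjugate_one_sub_mulVec_add N hdet l k hl
  refine ⟨m, ?_⟩
  have hM : 1 - N.map (Int.cast : ℤ → ℚ) = (1 - N).map Int.cast := by simp [Matrix.map_sub]
  have hw : ![((N 0 0 * N 0 1 - k 1 : ℤ) : ℚ), ((N 1 0 * N 1 1 + k 0 : ℤ) : ℚ)] =
      fun i => ((![N 0 0 * N 0 1 - k 1, N 1 0 * N 1 1 + k 0] i : ℤ) : ℚ) := by
    ext i; fin_cases i <;> rfl
  rw [hM, hw, hl, intCast_det_smul_dotProduct_inv_mulVec _ (by omega), ← hl]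
  exact_mod_cast hm.trans (two_mul m).symm

theorem stmt9 (N : Matrix (Fin 2) (Fin 2) ℤ) (θ : ℤ) (hθ : 3 ≤ θ)
    (hdet : N.det = 1) (htr : N.trace = θ)
    (α : ℝ) (hα : 1 < α) (a : Fin 2 → ℝ) (ha : a ≠ 0)
    (heig : (N.map (Int.cast : ℤ → ℝ)).mulVec a = α • a)
    (k : Fin 2 → ℤ) (hk : ∃ l : Fin 2 → ℤ, k = (2 - θ) • l) :
    ∃ m : ℤ,
      (fun i => (k i : ℚ)) ⬝ᵥ
          ((1 - N.map (Int.cast : ℤ → ℚ))⁻¹.mulVec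
            ![((N 0 0 * N 0 1 - k 1 : ℤ) : ℚ), ((N 1 0 * N 1 1 + k 0 : ℤ) : ℚ)])
        + ((k 0 * k 1 : ℤ) : ℚ) = 2 * (m : ℚ) :=
  stmt9_general N θ hdet htr k hk
end

section
/- Let N ∈ GL(2,ℤ) with an eigenvalue α > 1 and eigenvector a ∈ ℝ² \ {0}. Then the group Z⁺_{SL(2,ℤ)}(N) := {K ∈ SL(2,ℤ) : KN = NK and Ka ∈ ℝ₊*·a} is infinite cyclic. -/
/-!
Every `K` in the positive centralizer scales `a` by some `c > 0`, and `K ↦ c` is a homomorphism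
to the multiplicative group of positive reals. It is injective: if `K a = a` and `K ≠ 1`, the
nonzero singular integer matrix `K - 1` has an integer kernel vector `v`, which is then parallel to
`a`, hence an integer eigenvector of `N` for `α > 1`; as `N⁻¹` is integral too, `v = αᵏ • N⁻ᵏ v`
would force `αᵏ ≤ |vᵢ|` for all `k`. Its image is discrete, since `c + c⁻¹ = tr K` is an integer,
so no `c` lies in `(1, 2)`; and it contains `α²`, the image of `N²`. A nontrivial subgroup of the
positive reals in which `1` is isolated is infinite cyclic.
-/

open Matrix Set

instance Positive.instMulArchimedean {K : Type*} [Field K] [LinearOrder K] [IsStrictOrderedRing K]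
    [Archimedean K] : MulArchimedean {x : K // 0 < x} where
  arch x y hy := by
    obtain ⟨k, hk⟩ := pow_unbounded_of_one_lt (x : K) (Subtype.coe_lt_coe.mpr hy)
    exact ⟨k, Subtype.coe_le_coe.mp (by rw [Positive.val_pow]; exact hk.le)⟩

theorem exists_bijective_zpow_of_injective_of_disjoint_Ioo {H P : Type*} [Group H] [Nontrivial H]
    [CommGroup P] [LinearOrder P] [IsOrderedMonoid P] [MulArchimedean P] {φ : H →* P}
    (hφ : Function.Injective φ) {b : P} (hb : 1 < b) (hd : Disjoint (φ.range : Set P) (Ioo 1 b)) :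
    ∃ h₀ : H, Function.Bijective (fun n : ℤ => h₀ ^ n) := by
  obtain ⟨g, hg⟩ := Subgroup.cyclic_of_isolated_one hb hd
  obtain ⟨h₀, rfl⟩ : g ∈ φ.range := hg ▸ Subgroup.subset_closure rfl
  have hh₀ : φ h₀ ≠ 1 := by
    obtain ⟨h, hh⟩ := exists_ne (1 : H)
    intro h1
    rw [h1, Subgroup.closure_singleton_one] at hg
    have : φ h ∈ φ.range := ⟨h, rfl⟩
    exact hh (hφ ((Subgroup.mem_bot.mp (hg ▸ this)).trans φ.map_one.symm))
  refine ⟨h₀, fun m n hmn => ?_, fun h => ?_⟩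
  · have hinj := injective_zpow_iff_not_isOfFinOrder.mpr
      (mt (isOfFinOrder_iff_eq_one _).mp hh₀)
    exact hinj (by simpa only [map_zpow] using congrArg φ hmn)
  · have : φ h ∈ φ.range := ⟨h, rfl⟩
    obtain ⟨n, hn⟩ := Subgroup.mem_closure_singleton.mp (hg ▸ this)
    exact ⟨n, hφ (by rw [map_zpow, hn])⟩

section IntegerMatrices

variable {n : Type*} [Fintype n]

theorem Matrix.map_intCast_mul {R : Type*} [Ring R] (A B : Matrix n n ℤ) :
    (A * B).map (Int.cast : ℤ → R) = A.map Int.cast * B.map Int.cast :=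
  Matrix.map_mul (f := Int.castRingHom R)

theorem Matrix.map_intCast_mulVec {R : Type*} [Ring R] (A : Matrix n n ℤ) (v : n → ℤ) :
    A.map (Int.cast : ℤ → R) *ᵥ (Int.cast ∘ v) = Int.cast ∘ (A *ᵥ v) :=
  funext fun i => ((Int.castRingHom R).map_mulVec A v i).symm

variable [DecidableEq n]

theorem Matrix.eq_zero_of_mulVec_intCast_eq_smul
    {N : Matrix n n ℤ} (hN : IsUnit N.det) {α : ℝ} (hα : 1 < α) {v : n → ℤ}
    (hv : N.map (Int.cast : ℤ → ℝ) *ᵥ (Int.cast ∘ v) = α • (Int.cast ∘ v)) : v = 0 := by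
  set w : n → ℝ := Int.cast ∘ v
  set M := N⁻¹
  have hMN : M.map (Int.cast : ℤ → ℝ) * N.map Int.cast = 1 := by
    rw [← map_intCast_mul, nonsing_inv_mul N hN, Matrix.map_one _ Int.cast_zero Int.cast_one]
  have hMw : M.map (Int.cast : ℤ → ℝ) *ᵥ w = α⁻¹ • w := by
    rw [eq_inv_smul_iff₀ (by positivity), ← mulVec_smul, ← hv, mulVec_mulVec, hMN, one_mulVec]
  have hpow : ∀ k : ℕ, Int.cast ∘ (M ^ k *ᵥ v) = (α⁻¹) ^ k • w := by
    intro k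
    induction k with
    | zero => simp [w]
    | succ k ih =>
      rw [pow_succ', ← mulVec_mulVec, ← map_intCast_mulVec, ih, mulVec_smul, hMw, smul_smul,
        pow_succ]
  by_contra hv0
  obtain ⟨i, hi⟩ := Function.ne_iff.mp hv0
  obtain ⟨k, hk⟩ := pow_unbounded_of_one_lt |(v i : ℝ)| hα
  have hki : ((M ^ k *ᵥ v) i : ℝ) = (α⁻¹) ^ k * v i := congrFun (hpow k) i
  have hne : (M ^ k *ᵥ v) i ≠ 0 := by
    intro h0
    rw [h0, Int.cast_zero, eq_comm, mul_eq_zero] at hki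
    exact hki.elim (pow_ne_zero _ (by positivity)) (by exact_mod_cast hi)
  have hle : α ^ k ≤ |(v i : ℝ)| := by
    have h1 : (1 : ℝ) ≤ |((M ^ k *ᵥ v) i : ℝ)| := by exact_mod_cast Int.one_le_abs hne
    rwa [hki, abs_mul, abs_of_pos (by positivity), inv_pow, le_inv_mul_iff₀ (by positivity),
      mul_one] at h1
  exact hk.not_ge hle

end IntegerMatrices

section TwoByTwo

variable {N : Matrix (Fin 2) (Fin 2) ℤ} {α : ℝ} {a : Fin 2 → ℝ}

theorem Matrix.exists_smul_eq_of_mulVec_eq_zero {K : Type*} [Field K]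
    {M : Matrix (Fin 2) (Fin 2) K} (hM : M ≠ 0) {x y : Fin 2 → K} (hx0 : x ≠ 0)
    (hx : M *ᵥ x = 0) (hy : M *ᵥ y = 0) : ∃ μ : K, y = μ • x := by
  have hcross : x 0 * y 1 - x 1 * y 0 = 0 := by
    obtain ⟨i, j, hij⟩ : ∃ i j, M i j ≠ 0 := by
      by_contra! h; exact hM (Matrix.ext h)
    have h1 : M i 0 * x 0 + M i 1 * x 1 = 0 := by
      simpa [mulVec, dotProduct, Fin.sum_univ_two] using congrFun hx i
    have h2 : M i 0 * y 0 + M i 1 * y 1 = 0 := by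
      simpa [mulVec, dotProduct, Fin.sum_univ_two] using congrFun hy i
    have hcol : ∀ j, M i j * (x 0 * y 1 - x 1 * y 0) = 0 := Fin.forall_fin_two.mpr
      ⟨by linear_combination y 1 * h1 - x 1 * h2, by linear_combination x 0 * h2 - y 0 * h1⟩
    exact (mul_eq_zero.mp (hcol j)).resolve_left hij
  have hx0' : ∃ k, x k ≠ 0 := Function.ne_iff.mp hx0
  rcases Fin.exists_fin_two.mp hx0' with h0 | h1
  · refine ⟨y 0 / x 0, ?_⟩
    ext l; fin_cases l
    · simp [h0]
    · simp only [Fin.mk_one, Pi.smul_apply, smul_eq_mul]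
      field_simp
      linear_combination hcross
  · refine ⟨y 1 / x 1, ?_⟩
    ext l; fin_cases l
    · simp only [Fin.zero_eta, Pi.smul_apply, smul_eq_mul]
      field_simp
      linear_combination -hcross
    · simp [h1]

theorem Matrix.sq_sub_trace_mul_add_det_eq_zero {K : Type*} [Field K]
    {A : Matrix (Fin 2) (Fin 2) K} {x : Fin 2 → K} (hx0 : x ≠ 0) {c : K} (hx : A *ᵥ x = c • x) :
    c ^ 2 - A.trace * c + A.det = 0 := by
  have h : (scalar (Fin 2) c - A) *ᵥ x = 0 := by
    ext i; simp [sub_mulVec, hx]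
  rw [← (exists_mulVec_eq_zero_iff.mp ⟨x, hx0, h⟩), ← eval_charpoly, charpoly_fin_two]
  simp

theorem Matrix.eq_zero_of_mulVec_eigenvector_eq_zero (hN : IsUnit N.det) (hα : 1 < α)
    (ha : a ≠ 0) (heig : N.map (Int.cast : ℤ → ℝ) *ᵥ a = α • a) {M : Matrix (Fin 2) (Fin 2) ℤ}
    (hM : M.map (Int.cast : ℤ → ℝ) *ᵥ a = 0) : M = 0 := by
  by_contra hM0
  have hdet : M.det = 0 := by
    have h := exists_mulVec_eq_zero_iff.mp ⟨a, ha, hM⟩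
    exact_mod_cast (Int.cast_det M).trans h
  obtain ⟨v, hv0, hMv⟩ := exists_mulVec_eq_zero_iff.mpr hdet
  have hMv' : M.map (Int.cast : ℤ → ℝ) *ᵥ (Int.cast ∘ v) = 0 := by
    rw [map_intCast_mulVec, hMv]; exact funext fun _ => Int.cast_zero
  have hM0' : M.map (Int.cast : ℤ → ℝ) ≠ 0 := fun h =>
    hM0 (Matrix.map_injective Int.cast_injective (h.trans (Matrix.map_zero _ Int.cast_zero).symm))
  obtain ⟨μ, hμ⟩ := exists_smul_eq_of_mulVec_eq_zero hM0' ha hM hMv'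
  exact hv0 (eq_zero_of_mulVec_intCast_eq_smul hN hα (by rw [hμ, mulVec_smul, heig, smul_comm]))

end TwoByTwo

section PosCentralizer

variable {n : Type*} [Fintype n] [DecidableEq n]

def posCentralizer (N : Matrix n n ℤ) (a : n → ℝ) : Subgroup (Matrix.SpecialLinearGroup n ℤ) where
  carrier := {K | (K : Matrix n n ℤ) * N = N * K ∧
    ∃ c : ℝ, 0 < c ∧ (K : Matrix n n ℤ).map (Int.cast : ℤ → ℝ) *ᵥ a = c • a}
  one_mem' := ⟨by simp, 1, one_pos, by simp [Matrix.map_one]⟩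
  mul_mem' := by
    rintro K L ⟨hKN, c, hc, hKa⟩ ⟨hLN, d, hd, hLa⟩
    rw [mem_ofPred_eq, Matrix.SpecialLinearGroup.coe_mul]
    refine ⟨by rw [mul_assoc, hLN, ← mul_assoc, hKN, mul_assoc], c * d, mul_pos hc hd, ?_⟩
    rw [map_intCast_mul, ← mulVec_mulVec, hLa, mulVec_smul, hKa, smul_smul, mul_comm]
  inv_mem' := by
    rintro K ⟨hKN, c, hc, hKa⟩
    have hKK : ((K⁻¹ : Matrix.SpecialLinearGroup n ℤ) : Matrix n n ℤ) * K = 1 := by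
      rw [← Matrix.SpecialLinearGroup.coe_mul, inv_mul_cancel, Matrix.SpecialLinearGroup.coe_one]
    have hKK' : (K : Matrix n n ℤ) * (K⁻¹ : Matrix.SpecialLinearGroup n ℤ) = 1 := by
      rw [← Matrix.SpecialLinearGroup.coe_mul, mul_inv_cancel, Matrix.SpecialLinearGroup.coe_one]
    refine ⟨?_, c⁻¹, inv_pos.mpr hc, ?_⟩
    · calc _ = ((K⁻¹ : Matrix.SpecialLinearGroup n ℤ) : Matrix n n ℤ) * (N * K) * K⁻¹ := by
            rw [mul_assoc, mul_assoc N, hKK', mul_one]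
        _ = N * K⁻¹ := by rw [← hKN, ← mul_assoc, hKK, one_mul]
    · rw [eq_inv_smul_iff₀ hc.ne', ← mulVec_smul, ← hKa, mulVec_mulVec, ← map_intCast_mul, hKK]
      simp [Matrix.map_one]

namespace posCentralizer

variable {N : Matrix n n ℤ} {a : n → ℝ}

theorem exists_pos_mulVec_eq_smul (K : posCentralizer N a) : ∃ c : ℝ, 0 < c ∧
    (K : Matrix n n ℤ).map (Int.cast : ℤ → ℝ) *ᵥ a = c • a :=
  K.2.2

noncomputable def scale (ha : a ≠ 0) : posCentralizer N a →* {x : ℝ // 0 < x} where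
  toFun K := ⟨(exists_pos_mulVec_eq_smul K).choose, (exists_pos_mulVec_eq_smul K).choose_spec.1⟩
  map_one' := Subtype.ext <| smul_left_injective ℝ ha <|
    (exists_pos_mulVec_eq_smul 1).choose_spec.2.symm.trans (by simp [Matrix.map_one])
  map_mul' K L := Subtype.ext <| smul_left_injective ℝ ha <| by
    obtain ⟨-, hK⟩ := (exists_pos_mulVec_eq_smul K).choose_spec
    obtain ⟨-, hL⟩ := (exists_pos_mulVec_eq_smul L).choose_spec
    dsimp only
    rw [Positive.val_mul, mul_comm, ← smul_smul, ← hK, ← mulVec_smul, ← hL, mulVec_mulVec,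
      ← map_intCast_mul, ← Matrix.SpecialLinearGroup.coe_mul, ← Subgroup.coe_mul]
    exact (exists_pos_mulVec_eq_smul (K * L)).choose_spec.2.symm

theorem mulVec_eq_scale_smul (ha : a ≠ 0) (K : posCentralizer N a) :
    (K : Matrix n n ℤ).map (Int.cast : ℤ → ℝ) *ᵥ a =
      (scale ha K : ℝ) • a :=
  (exists_pos_mulVec_eq_smul K).choose_spec.2

end posCentralizer

end PosCentralizer

namespace posCentralizer

variable {N : Matrix (Fin 2) (Fin 2) ℤ} {α : ℝ} {a : Fin 2 → ℝ}

theorem scale_injective (hN : IsUnit N.det) (hα : 1 < α) (ha : a ≠ 0)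
    (heig : N.map (Int.cast : ℤ → ℝ) *ᵥ a = α • a) : Function.Injective (scale (N := N) ha) := by
  refine (injective_iff_map_eq_one _).mpr fun K hK => ?_
  have h : ((K : Matrix (Fin 2) (Fin 2) ℤ) - 1).map (Int.cast : ℤ → ℝ) *ᵥ a = 0 := by
    rw [Matrix.map_sub _ Int.cast_sub, sub_mulVec, mulVec_eq_scale_smul ha, hK]
    simp [Matrix.map_one]
  exact Subtype.ext <| Subtype.ext <| sub_eq_zero.mp <|
    eq_zero_of_mulVec_eigenvector_eq_zero hN hα ha heig h

theorem scale_add_inv_scale (ha : a ≠ 0) (K : posCentralizer N a) :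
    (scale ha K : ℝ) + (scale ha K : ℝ)⁻¹ = (K : Matrix (Fin 2) (Fin 2) ℤ).trace := by
  have h := sq_sub_trace_mul_add_det_eq_zero ha (mulVec_eq_scale_smul ha K)
  rw [← Int.cast_det, Matrix.SpecialLinearGroup.det_coe, Int.cast_one, trace_fin_two] at h
  have hc : (scale ha K : ℝ) ≠ 0 := (scale ha K).2.ne'
  rw [trace_fin_two, Int.cast_add]
  field_simp
  simp only [map_apply] at h
  linear_combination h

theorem disjoint_range_scale_Ioo (ha : a ≠ 0) :
    Disjoint ((scale (N := N) ha).range : Set {x : ℝ // 0 < x}) (Ioo 1 ⟨2, two_pos⟩) := by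
  rw [Set.disjoint_left]
  rintro _ ⟨K, rfl⟩ ⟨h1, h2⟩
  -- `c + c⁻¹` would be an integer strictly between `2` and `3`.
  set c : ℝ := (scale ha K : ℝ)
  have h1 : 1 < c := h1
  have h2 : c < 2 := h2
  have hlow : 2 < c + c⁻¹ := by
    have : c + c⁻¹ - 2 = (c - 1) ^ 2 / c := by field_simp; ring
    linarith [div_pos (pow_pos (sub_pos.mpr h1) 2) (one_pos.trans h1)]
  have hup : c + c⁻¹ < 3 := by linarith [inv_lt_one_of_one_lt₀ h1]
  rw [scale_add_inv_scale] at hlow hup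
  norm_cast at hlow hup
  omega

theorem nontrivial (hN : IsUnit N.det) (hα : 1 < α) (ha : a ≠ 0)
    (heig : N.map (Int.cast : ℤ → ℝ) *ᵥ a = α • a) : Nontrivial (posCentralizer N a) := by
  have hN2 : (N * N).det = 1 := by rw [det_mul, ← sq, Int.isUnit_sq hN]
  have hN2a : (N * N).map (Int.cast : ℤ → ℝ) *ᵥ a = α ^ 2 • a := by
    rw [map_intCast_mul, ← mulVec_mulVec, heig, mulVec_smul, heig, smul_smul, sq]
  refine ⟨⟨⟨⟨N * N, hN2⟩, mul_assoc N N N, α ^ 2, by positivity, hN2a⟩, 1, fun h => ?_⟩⟩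
  have h1 : N * N = 1 :=
    congrArg (fun K : posCentralizer N a => (K : Matrix (Fin 2) (Fin 2) ℤ)) h
  rw [h1, Matrix.map_one _ Int.cast_zero Int.cast_one, one_mulVec] at hN2a
  have : α ^ 2 = 1 := smul_left_injective ℝ ha (hN2a.symm.trans (one_smul ℝ a).symm)
  nlinarith

end posCentralizer

theorem stmt11 (N : Matrix (Fin 2) (Fin 2) ℤ) (hN : IsUnit N.det)
    (α : ℝ) (hα : 1 < α) (a : Fin 2 → ℝ) (ha : a ≠ 0)
    (heig : (N.map (Int.cast : ℤ → ℝ)).mulVec a = α • a) :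
    ∃ K₀ : Matrix.SpecialLinearGroup (Fin 2) ℤ,
      Function.Injective (fun n : ℤ => K₀ ^ n) ∧
      ∀ K : Matrix.SpecialLinearGroup (Fin 2) ℤ,
        (((K : Matrix (Fin 2) (Fin 2) ℤ) * N = N * (K : Matrix (Fin 2) (Fin 2) ℤ) ∧
            ∃ c : ℝ, 0 < c ∧
              ((K : Matrix (Fin 2) (Fin 2) ℤ).map (Int.cast : ℤ → ℝ)).mulVec a = c • a)
          ↔ ∃ n : ℤ, K = K₀ ^ n) := by
  have := posCentralizer.nontrivial hN hα ha heig
  obtain ⟨K₀, hinj, hsurj⟩ := exists_bijective_zpow_of_injective_of_disjoint_Ioo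
    (posCentralizer.scale_injective hN hα ha heig) (Subtype.mk_lt_mk.mpr one_lt_two)
    (posCentralizer.disjoint_range_scale_Ioo ha)
  refine ⟨K₀, fun m n hmn => hinj (Subtype.ext (by simpa using hmn)), fun K => ⟨fun hK => ?_, ?_⟩⟩
  · obtain ⟨n, hn⟩ := hsurj ⟨K, hK⟩
    exact ⟨n, by rw [← Subgroup.coe_zpow]; exact congrArg Subtype.val hn.symm⟩
  · rintro ⟨n, rfl⟩
    exact zpow_mem K₀.2 n
end

section
/- Let N ∈ GL(2,ℤ) with an irrational eigenvalue α > 1 and eigenvector a ∈ ℝ² \ {0}. Then the group Z⁺_{GL(2,ℤ)}(N) := {K ∈ GL(2,ℤ) : KN = NK and Ka ∈ ℝ₊*·a} is infinite cyclic. -/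
/-!
The coordinates of `a` are linearly independent over `ℤ`: otherwise `a` would be a real multiple
of an integer vector, and `α` would be rational. Hence an integer matrix is determined by its
action on `a`. In particular every `K ∈ GL(2,ℤ)` with `K a = c a` commutes with `N`, and `K ↦ c`
embeds the stabilizer of the ray `ℝ₊* a` into the multiplicative group of positive reals.
An eigenvalue `c > 1` of a matrix in `GL(2,ℤ)` is a root of `X² - tX ± 1` with `t ∈ ℤ`, which
forces `c ≥ φ`, the golden ratio. So the image is a discrete subgroup, hence cyclic, and it is
nontrivial since it contains `α`.
-/

open Matrix

instance : MulArchimedean {x : ℝ // 0 < x} where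
  arch x y hy := by
    obtain ⟨n, hn⟩ := pow_unbounded_of_one_lt (x : ℝ) (Subtype.coe_lt_coe.2 hy)
    exact ⟨n, Subtype.coe_le_coe.1 (by simpa using hn.le)⟩

theorem Matrix.sq_sub_trace_mul_add_det_eq_zero_of_mulVec_eq_smul {K : Type*} [Field K]
    {M : Matrix (Fin 2) (Fin 2) K} {v : Fin 2 → K} {c : K} (hv : v ≠ 0) (h : M *ᵥ v = c • v) :
    c ^ 2 - M.trace * c + M.det = 0 := by
  have hvec : Module.End.HasEigenvector (toLin' M) c v :=
    ⟨Module.End.mem_eigenspace_iff.2 (by simpa using h), hv⟩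
  have hroot := (Module.End.hasEigenvalue_iff_isRoot_charpoly _ _).1
    (Module.End.hasEigenvalue_of_hasEigenvector hvec)
  simpa [Matrix.charpoly_toLin', Matrix.charpoly_fin_two] using hroot

theorem Real.goldenRatio_le_of_sq_sub_mul_add_eq_zero {c : ℝ} {t d : ℤ} (hd : IsUnit d)
    (h : c ^ 2 - t * c + d = 0) (hc : 1 < c) : Real.goldenRatio ≤ c := by
  have hquad : c + 1 ≤ c ^ 2 := by
    rcases Int.isUnit_iff.1 hd with rfl | rfl <;> push_cast at h
    · have ht : (2 : ℝ) < t := by nlinarith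
      have ht : (3 : ℝ) ≤ t := by exact_mod_cast (show (2 : ℤ) < t by exact_mod_cast ht)
      nlinarith
    · have ht : (0 : ℝ) < t := by nlinarith
      have ht : (1 : ℝ) ≤ t := by exact_mod_cast (show (0 : ℤ) < t by exact_mod_cast ht)
      nlinarith
  nlinarith [Real.goldenRatio_sq, Real.one_lt_goldenRatio]

theorem LinearIndependent.injective_map_intCast_mulVec {m n : Type*} [Fintype n] {a : n → ℝ}
    (ha : LinearIndependent ℤ a) :
    Function.Injective fun M : Matrix m n ℤ => M.map (Int.cast : ℤ → ℝ) *ᵥ a := by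
  intro M M' h
  ext i j
  have hrow : ∑ k, (M i k - M' i k) • a k = 0 := by
    have := congrFun h i
    simp only [mulVec, dotProduct, map_apply] at this
    simp [sub_smul, Finset.sum_sub_distrib, this]
  exact sub_eq_zero.1 (Fintype.linearIndependent_iff.1 ha _ hrow j)

theorem not_irrational_of_map_intCast_mulVec_eq_smul {n : Type*} [Fintype n]
    (N : Matrix n n ℤ) {w : n → ℤ} (hw : w ≠ 0) {α : ℝ}
    (h : N.map (Int.cast : ℤ → ℝ) *ᵥ (Int.cast ∘ w) = α • (Int.cast ∘ w)) : ¬Irrational α := by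
  obtain ⟨i, hi⟩ := Function.ne_iff.1 hw
  have hcoord : α * w i = ((N *ᵥ w) i : ℤ) := by
    have := RingHom.map_mulVec (Int.castRingHom ℝ) N w i
    simp only [eq_intCast] at this
    simpa [this, mul_comm] using (congrFun h i).symm
  exact fun hα => Int.not_irrational _ (hcoord ▸ hα.mul_intCast hi)

theorem exists_eq_smul_intCast_of_not_linearIndependent {a : Fin 2 → ℝ}
    (h : ¬LinearIndependent ℤ a) : ∃ (s : ℝ) (w : Fin 2 → ℤ), w ≠ 0 ∧ a = s • (Int.cast ∘ w) := by
  obtain ⟨g, hg, hne⟩ := Fintype.not_linearIndependent_iff.1 h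
  simp only [Fin.sum_univ_two, zsmul_eq_mul] at hg
  have hw : ![-g 1, g 0] ≠ 0 := fun h0 => by
    obtain ⟨i, hi⟩ := hne
    have h0' := congrFun h0 0
    have h1' := congrFun h0 1
    fin_cases i <;> simp_all
  by_cases hg1 : g 1 = 0
  · have hg0 : g 0 ≠ 0 := by simpa [hg1] using hw
    refine ⟨a 1 / g 0, _, hw, funext fun i => ?_⟩
    have ha0 : a 0 = 0 := by simpa [hg1, hg0] using hg
    fin_cases i <;> simp [hg1, ha0, hg0]
  · refine ⟨-a 0 / g 1, _, hw, funext fun i => ?_⟩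
    have hg1' : (g 1 : ℝ) ≠ 0 := by exact_mod_cast hg1
    fin_cases i
    · simp [hg1']
    · simp only [Fin.mk_one, Pi.smul_apply, Function.comp_apply, Matrix.cons_val_one,
        Matrix.cons_val_zero, smul_eq_mul]
      rw [div_mul_eq_mul_div, eq_div_iff hg1']
      linarith

theorem linearIndependent_int_of_irrational_eigenvalue (N : Matrix (Fin 2) (Fin 2) ℤ) {α : ℝ}
    (hα : Irrational α) {a : Fin 2 → ℝ} (ha : a ≠ 0)
    (heig : N.map (Int.cast : ℤ → ℝ) *ᵥ a = α • a) : LinearIndependent ℤ a := by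
  by_contra h
  obtain ⟨s, w, hw, rfl⟩ := exists_eq_smul_intCast_of_not_linearIndependent h
  have hs : s ≠ 0 := by rintro rfl; simp at ha
  refine not_irrational_of_map_intCast_mulVec_eq_smul N hw ?_ hα
  rw [mulVec_smul, smul_comm] at heig
  exact smul_right_injective _ hs heig

theorem LinearIndependent.commute_of_map_intCast_mulVec_eq_smul {n : Type*} [Fintype n]
    {a : n → ℝ} (ha : LinearIndependent ℤ a) {K N : Matrix n n ℤ} {c α : ℝ}
    (hK : K.map (Int.cast : ℤ → ℝ) *ᵥ a = c • a) (hN : N.map (Int.cast : ℤ → ℝ) *ᵥ a = α • a) :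
    Commute K N := by
  have hmap (A B : Matrix n n ℤ) :
      (A * B).map (Int.cast : ℤ → ℝ) = A.map Int.cast * B.map Int.cast :=
    Matrix.map_mul (f := Int.castRingHom ℝ)
  apply ha.injective_map_intCast_mulVec
  simp only [hmap, ← mulVec_mulVec, hK, hN, mulVec_smul, smul_smul, mul_comm]

namespace Matrix.GeneralLinearGroup

section

variable {n : Type*} [Fintype n] [DecidableEq n]

def rayStabilizer (a : n → ℝ) : Subgroup (GL n ℝ) where
  carrier := {K | ∃ c : ℝ, 0 < c ∧ (K : Matrix n n ℝ) *ᵥ a = c • a}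
  mul_mem' := by
    rintro K L ⟨c, hc, hK⟩ ⟨d, hd, hL⟩
    refine ⟨c * d, mul_pos hc hd, ?_⟩
    rw [Units.val_mul, ← mulVec_mulVec, hL, mulVec_smul, hK, smul_smul, mul_comm]
  one_mem' := ⟨1, one_pos, by simp⟩
  inv_mem' := by
    rintro K ⟨c, hc, hK⟩
    refine ⟨c⁻¹, inv_pos.2 hc, ?_⟩
    have : ((K⁻¹ : GL n ℝ) : Matrix n n ℝ) *ᵥ (c • a) = a := by
      rw [← hK, mulVec_mulVec, ← Units.val_mul, inv_mul_cancel, Units.val_one, one_mulVec]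
    rw [← this, mulVec_smul, smul_smul, inv_mul_cancel₀ hc.ne', one_smul, ← mulVec_smul, this]

variable {a : n → ℝ}

noncomputable def rayEigenvalue (ha : a ≠ 0) : rayStabilizer a →* {x : ℝ // 0 < x} :=
  have spec (K : rayStabilizer a) : ((K : GL n ℝ) : Matrix n n ℝ) *ᵥ a = K.2.choose • a :=
    K.2.choose_spec.2
  MonoidHom.mk' (fun K => ⟨K.2.choose, K.2.choose_spec.1⟩) fun K L =>
    Subtype.ext <| smul_left_injective ℝ ha <|
      calc (K * L).2.choose • a = (((K * L : rayStabilizer a) : GL n ℝ) : Matrix n n ℝ) *ᵥ a :=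
            (spec _).symm
        _ = ((K : GL n ℝ) : Matrix n n ℝ) *ᵥ L.2.choose • a := by
          rw [← spec L, mulVec_mulVec]; rfl
        _ = (K.2.choose * L.2.choose) • a := by
          rw [mulVec_smul, mul_comm, ← smul_smul, ← spec K]

theorem mulVec_rayEigenvalue (ha : a ≠ 0) (K : rayStabilizer a) :
    ((K : GL n ℝ) : Matrix n n ℝ) *ᵥ a = (rayEigenvalue ha K : ℝ) • a :=
  K.2.choose_spec.2

theorem mem_comap_rayStabilizer {K : GL n ℤ} :
    K ∈ (rayStabilizer a).comap (map (Int.castRingHom ℝ)) ↔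
      ∃ c : ℝ, 0 < c ∧ (K : Matrix n n ℤ).map (Int.cast : ℤ → ℝ) *ᵥ a = c • a :=
  Iff.rfl

noncomputable def intRayEigenvalue (ha : a ≠ 0) :
    (rayStabilizer a).comap (map (Int.castRingHom ℝ)) →* {x : ℝ // 0 < x} :=
  (rayEigenvalue ha).comp ((map (Int.castRingHom ℝ)).subgroupComap _)

theorem map_intCast_mulVec_intRayEigenvalue (ha : a ≠ 0)
    (K : (rayStabilizer a).comap (map (Int.castRingHom ℝ))) :
    ((K : GL n ℤ) : Matrix n n ℤ).map (Int.cast : ℤ → ℝ) *ᵥ a = (intRayEigenvalue ha K : ℝ) • a :=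
  mulVec_rayEigenvalue ha ((map (Int.castRingHom ℝ)).subgroupComap _ K)

theorem injective_intRayEigenvalue (ha : a ≠ 0) (hli : LinearIndependent ℤ a) :
    Function.Injective (intRayEigenvalue ha) := by
  intro K L h
  refine Subtype.ext (Units.ext (hli.injective_map_intCast_mulVec ?_))
  dsimp only
  rw [map_intCast_mulVec_intRayEigenvalue ha, map_intCast_mulVec_intRayEigenvalue ha, h]

theorem injective_zpow_coe_of_ne_one (ha : a ≠ 0) (hli : LinearIndependent ℤ a)
    {g : (rayStabilizer a).comap (map (Int.castRingHom ℝ))} (hg : g ≠ 1) :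
    Function.Injective fun k : ℤ => (g : GL n ℤ) ^ k := by
  have := Function.Injective.isMulTorsionFree _ (injective_intRayEigenvalue ha hli)
  have hg_inf : ¬IsOfFinOrder g := by rwa [isOfFinOrder_iff_eq_one]
  intro i j hij
  exact injective_zpow_iff_not_isOfFinOrder.2 hg_inf (Subtype.ext (by simpa using hij))

end

theorem goldenRatio_le_of_map_intCast_mulVec_eq_smul (K : GL (Fin 2) ℤ) {v : Fin 2 → ℝ} {c : ℝ}
    (hv : v ≠ 0) (h : (K : Matrix (Fin 2) (Fin 2) ℤ).map (Int.cast : ℤ → ℝ) *ᵥ v = c • v)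
    (hc : 1 < c) : Real.goldenRatio ≤ c := by
  have hq := sq_sub_trace_mul_add_det_eq_zero_of_mulVec_eq_smul hv h
  refine Real.goldenRatio_le_of_sq_sub_mul_add_eq_zero
    (t := (K : Matrix (Fin 2) (Fin 2) ℤ).trace) ((isUnit_iff_isUnit_det _).1 K.isUnit) ?_ hc
  simpa [Matrix.trace, Fin.sum_univ_two, Matrix.det_fin_two] using hq

theorem isCyclic_comap_rayStabilizer {a : Fin 2 → ℝ} (ha : a ≠ 0)
    (hli : LinearIndependent ℤ a) :
    IsCyclic ((rayStabilizer a).comap (map (Int.castRingHom ℝ))) := by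
  have hdisc : Disjoint ((intRayEigenvalue ha).range : Set {x : ℝ // 0 < x})
      (Set.Ioo 1 ⟨Real.goldenRatio, Real.goldenRatio_pos⟩) := by
    refine Set.disjoint_left.2 ?_
    rintro _ ⟨K, rfl⟩ ⟨h1, hφ⟩
    exact (Subtype.coe_lt_coe.2 hφ).not_ge <| goldenRatio_le_of_map_intCast_mulVec_eq_smul K ha
      (map_intCast_mulVec_intRayEigenvalue ha K) (Subtype.coe_lt_coe.2 h1)
  obtain ⟨b, hb⟩ :=
    Subgroup.cyclic_of_isolated_one (Subtype.coe_lt_coe.1 Real.one_lt_goldenRatio) hdisc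
  have : IsCyclic (intRayEigenvalue ha).range :=
    (Subgroup.isCyclic_iff_exists_zpowers_eq_top _).2 ⟨b, by rw [hb, Subgroup.zpowers_eq_closure]⟩
  exact isCyclic_of_injective (intRayEigenvalue ha).rangeRestrict
    ((intRayEigenvalue ha).rangeRestrict_injective_iff.2 (injective_intRayEigenvalue ha hli))

end Matrix.GeneralLinearGroup

theorem stmt12 (N : Matrix (Fin 2) (Fin 2) ℤ) (hN : IsUnit N.det)
    (α : ℝ) (hα : 1 < α) (hirr : Irrational α) (a : Fin 2 → ℝ) (ha : a ≠ 0)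
    (heig : (N.map (Int.cast : ℤ → ℝ)).mulVec a = α • a) :
    ∃ K₀ : Matrix.GeneralLinearGroup (Fin 2) ℤ,
      Function.Injective (fun n : ℤ => K₀ ^ n) ∧
      ∀ K : Matrix.GeneralLinearGroup (Fin 2) ℤ,
        (((K : Matrix (Fin 2) (Fin 2) ℤ) * N = N * (K : Matrix (Fin 2) (Fin 2) ℤ) ∧
            ∃ c : ℝ, 0 < c ∧
              ((K : Matrix (Fin 2) (Fin 2) ℤ).map (Int.cast : ℤ → ℝ)).mulVec a = c • a)
          ↔ ∃ n : ℤ, K = K₀ ^ n) := by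
  have hli := linearIndependent_int_of_irrational_eigenvalue N hirr ha heig
  set S := (GeneralLinearGroup.rayStabilizer a).comap
    (GeneralLinearGroup.map (Int.castRingHom ℝ))
  obtain ⟨g, hg⟩ := (GeneralLinearGroup.isCyclic_comap_rayStabilizer ha hli).exists_generator
  have hNS : nonsingInvUnit N hN ∈ S :=
    GeneralLinearGroup.mem_comap_rayStabilizer.2 ⟨α, zero_lt_one.trans hα, heig⟩
  have hg1 : g ≠ 1 := by
    rintro rfl
    have hN1 := hg ⟨_, hNS⟩
    rw [Subgroup.zpowers_one_eq_bot, Subgroup.mem_bot] at hN1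
    replace hN1 : N = 1 :=
      congrArg (fun K : S => ((K : GL (Fin 2) ℤ) : Matrix (Fin 2) (Fin 2) ℤ)) hN1
    rw [hN1, Matrix.map_one _ Int.cast_zero Int.cast_one, one_mulVec] at heig
    exact hα.ne' (smul_left_injective ℝ ha (by simpa using heig.symm))
  refine ⟨g, GeneralLinearGroup.injective_zpow_coe_of_ne_one ha hli hg1,
    fun K => ⟨fun ⟨_, hK⟩ => ?_, ?_⟩⟩
  · obtain ⟨n, hn⟩ := Subgroup.mem_zpowers_iff.1 (hg ⟨K, hK⟩)
    exact ⟨n, by rw [← Subgroup.coe_zpow, hn]⟩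
  · rintro ⟨n, rfl⟩
    obtain ⟨c, -, hc⟩ := GeneralLinearGroup.mem_comap_rayStabilizer.1 (S.zpow_mem g.2 n)
    exact ⟨(hli.commute_of_map_intCast_mulVec_eq_smul hc heig).eq, S.zpow_mem g.2 n⟩
end

section
/- Let N ∈ M₂(ℤ) be a matrix whose characteristic polynomial has two distinct complex roots. Then the centralizer of N in M₂(ℤ) equals {xN + yI₂ : the rational pair (x,y) makes xN + yI₂ an integer matrix}; if moreover gcd(n₁₂, n₂₁, n₂₂ − n₁₁) = 1, then Z_{M₂(ℤ)}(N) = {xN + yI₂ : x, y ∈ ℤ}. -/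
open Polynomial Matrix

theorem stmt14 (N : Matrix (Fin 2) (Fin 2) ℤ)
    (hroots : ∃ r s : ℂ, r ≠ s ∧
      (N.map (Int.cast : ℤ → ℂ)).charpoly = (X - C r) * (X - C s)) :
    ({L : Matrix (Fin 2) (Fin 2) ℤ | L * N = N * L}
        = {L | ∃ x y : ℚ, L.map ((↑) : ℤ → ℚ)
            = x • N.map ((↑) : ℤ → ℚ) + y • (1 : Matrix (Fin 2) (Fin 2) ℚ)}) ∧
      (Int.gcd (N 0 1) (Int.gcd (N 1 0) (N 1 1 - N 0 0)) = 1 →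
        {L : Matrix (Fin 2) (Fin 2) ℤ | L * N = N * L}
          = {L | ∃ x y : ℤ, L = x • N + y • (1 : Matrix (Fin 2) (Fin 2) ℤ)}) := by
  obtain ⟨r, s, hrs, hchar⟩ := hroots
  set a := N 0 0 with ha
  set b := N 0 1 with hb
  set c := N 1 0 with hc
  set d := N 1 1 with hd
  -- trace and det
  have htr := Matrix.trace_eq_neg_charpoly_coeff (N.map (Int.cast : ℤ → ℂ))
  have hdet := Matrix.det_eq_sign_charpoly_coeff (N.map (Int.cast : ℤ → ℂ))
  rw [hchar] at htr hdet
  have e : (X - C r) * (X - C s) = X^2 - C (r + s) * X + C (r*s) := by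
    rw [C_mul, C_add]; ring
  rw [e] at htr hdet
  simp [coeff_one, coeff_X, Matrix.trace_fin_two, Matrix.det_fin_two,
    Matrix.map_apply] at htr hdet
  -- htr : ↑a + ↑d = r + s ; hdet : ↑a * ↑d - ↑b * ↑c = r * s
  have hdiscC : (((a - d)^2 + 4 * b * c : ℤ) : ℂ) = (r - s)^2 := by
    push_cast
    linear_combination (↑a + ↑d + r + s) * htr - 4 * hdet
  have hdisc : (a - d)^2 + 4 * b * c ≠ 0 := by
    intro h
    apply hrs
    have : (r - s)^2 = 0 := by rw [← hdiscC, h]; simp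
    have := pow_eq_zero_iff (n := 2) (by norm_num) |>.mp this
    exact sub_eq_zero.mp this
  -- key : commuting implies rational combination, entrywise
  have key : ∀ L : Matrix (Fin 2) (Fin 2) ℤ, L * N = N * L →
      ∃ x y : ℚ, ((L 0 0 : ℚ) = x * a + y) ∧ ((L 0 1 : ℚ) = x * b) ∧
        ((L 1 0 : ℚ) = x * c) ∧ ((L 1 1 : ℚ) = x * d + y) := by
    intro L hL
    have h00 := congrFun (congrFun hL 0) 0
    have h01 := congrFun (congrFun hL 0) 1
    have h10 := congrFun (congrFun hL 1) 0
    simp only [Matrix.mul_apply, Fin.sum_univ_two] at h00 h01 h10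
    simp only [← ha, ← hb, ← hc, ← hd] at h00 h01 h10
    -- h00 : L 0 0 * a + L 0 1 * c = a * L 0 0 + b * L 1 0
    by_cases hb0 : b ≠ 0
    · refine ⟨(L 0 1 : ℚ) / b, (L 0 0 : ℚ) - (L 0 1 : ℚ) / b * a, by ring, by
        field_simp, ?_, ?_⟩
      · have : (L 0 1 : ℚ) * c = b * L 1 0 := by exact_mod_cast congrArg (Int.cast : ℤ → ℚ) (by linarith : L 0 1 * c = b * L 1 0)
        field_simp
        linarith [this]
      · have : (L 0 0 : ℚ) * b + L 0 1 * d = a * L 0 1 + b * L 1 1 := by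
          exact_mod_cast congrArg (Int.cast : ℤ → ℚ) h01
        field_simp
        ring_nf
        ring_nf at this
        linarith [this]
    · push_neg at hb0
      by_cases hc0 : c ≠ 0
      · refine ⟨(L 1 0 : ℚ) / c, (L 0 0 : ℚ) - (L 1 0 : ℚ) / c * a, by ring, ?_, by
          field_simp, ?_⟩
        · have : L 0 1 * c = 0 := by rw [hb0] at h00; linarith
          have : L 0 1 = 0 := by
            rcases mul_eq_zero.mp this with h | h
            · exact h
            · exact absurd h hc0
          rw [this, hb0]; simp
        · have : (L 1 0 : ℚ) * a + L 1 1 * c = c * L 0 0 + d * L 1 0 := by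
            exact_mod_cast congrArg (Int.cast : ℤ → ℚ) h10
          field_simp
          ring_nf
          ring_nf at this
          linarith [this]
      · push_neg at hc0
        have had : a ≠ d := by
          intro h; apply hdisc; rw [h, hb0, hc0]; ring
        have hq : L 0 1 = 0 := by
          rw [hb0] at h01
          have : L 0 1 * (d - a) = 0 := by linarith
          rcases mul_eq_zero.mp this with h | h
          · exact h
          · exact absurd (by linarith [sub_eq_zero.mp h] : a = d) had
        have hr : L 1 0 = 0 := by
          rw [hc0] at h10
          have : L 1 0 * (a - d) = 0 := by linarith
          rcases mul_eq_zero.mp this with h | h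
          · exact h
          · exact absurd (sub_eq_zero.mp h) had
        have hadQ : (a : ℚ) - d ≠ 0 := by
          rw [sub_ne_zero]; exact_mod_cast had
        refine ⟨((L 0 0 : ℚ) - L 1 1) / (a - d),
          (L 0 0 : ℚ) - ((L 0 0 : ℚ) - L 1 1) / (a - d) * a, by ring, ?_, ?_, ?_⟩
        · rw [hq, hb0]; simp
        · rw [hr, hc0]; simp
        · field_simp
          ring
  -- map injectivity helper
  have hinj : Function.Injective (fun M : Matrix (Fin 2) (Fin 2) ℤ =>
      M.map ((↑) : ℤ → ℚ)) := by
    intro M₁ M₂ h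
    ext i j
    have := congrFun (congrFun h i) j
    simpa [Matrix.map_apply] using this
  constructor
  · ext L
    simp only [Set.mem_setOf_eq]
    constructor
    · intro hL
      obtain ⟨x, y, e00, e01, e10, e11⟩ := key L hL
      refine ⟨x, y, ?_⟩
      ext i j
      fin_cases i <;> fin_cases j <;>
        simp [Matrix.map_apply, Matrix.add_apply, Matrix.smul_apply, Matrix.one_apply,
          ← ha, ← hb, ← hc, ← hd] <;>
        [exact e00; simpa using e01; simpa using e10; exact e11]
    · rintro ⟨x, y, hxy⟩
      apply hinj
      show (L * N).map _ = (N * L).map _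
      have hm : ∀ M₁ M₂ : Matrix (Fin 2) (Fin 2) ℤ,
          (M₁ * M₂).map ((↑) : ℤ → ℚ) = M₁.map (↑) * M₂.map (↑) := fun M₁ M₂ =>
        Matrix.map_mul (f := Int.castRingHom ℚ)
      rw [hm, hm, hxy]
      rw [add_mul, mul_add, smul_mul_assoc, mul_smul_comm, smul_mul_assoc,
        mul_smul_comm, one_mul, mul_one]
  · intro hgcd
    ext L
    simp only [Set.mem_setOf_eq]
    constructor
    · intro hL
      obtain ⟨x, y, e00, e01, e10, e11⟩ := key L hL
      -- Bezout
      set g : ℕ := Int.gcd c (d - a) with hg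
      have hbez2 : (g : ℤ) = c * Int.gcdA c (d - a) + (d - a) * Int.gcdB c (d - a) :=
        Int.gcd_eq_gcd_ab c (d - a)
      have hbez1 : ((Int.gcd b (g : ℤ) : ℤ)) = b * Int.gcdA b g + g * Int.gcdB b g :=
        Int.gcd_eq_gcd_ab b g
      rw [hgcd] at hbez1
      set U := Int.gcdA b g
      set V := Int.gcdB b g
      set A := Int.gcdA c (d - a)
      set B := Int.gcdB c (d - a)
      have hbez : (1 : ℤ) = b * U + c * (A * V) + (d - a) * (B * V) := by
        rw [hbez2] at hbez1
        push_cast at hbez1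
        linear_combination hbez1
      set xi : ℤ := L 0 1 * U + L 1 0 * (A * V) + (L 1 1 - L 0 0) * (B * V) with hxi
      have hxiq : (xi : ℚ) = x := by
        have hbezQ : (1 : ℚ) = b * U + c * (A * V) + (d - a) * (B * V) := by
          exact_mod_cast congrArg (Int.cast : ℤ → ℚ) hbez
        rw [hxi]
        push_cast
        rw [e01, e10, e11, e00]
        linear_combination -x * hbezQ
      set yi : ℤ := L 0 0 - xi * a with hyi
      have hyiq : (yi : ℚ) = y := by
        rw [hyi]; push_cast; rw [e00, hxiq]; ring
      refine ⟨xi, yi, ?_⟩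
      have e00' : L 0 0 = xi * a + yi := by
        rw [← hxiq, ← hyiq] at e00; exact_mod_cast e00
      have e01' : L 0 1 = xi * b := by rw [← hxiq] at e01; exact_mod_cast e01
      have e10' : L 1 0 = xi * c := by rw [← hxiq] at e10; exact_mod_cast e10
      have e11' : L 1 1 = xi * d + yi := by
        rw [← hxiq, ← hyiq] at e11; exact_mod_cast e11
      ext i j
      fin_cases i <;> fin_cases j <;>
        (simp only [Matrix.add_apply, Matrix.smul_apply, smul_eq_mul, Matrix.one_apply];
         norm_num)
      · rw [← ha]; exact e00'
      · rw [← hb]; exact e01'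
      · rw [← hc]; exact e10'
      · rw [← hd]; exact e11'
    · rintro ⟨x, y, hxy⟩
      subst hxy
      rw [add_mul, mul_add, smul_mul_assoc, mul_smul_comm, smul_mul_assoc,
        mul_smul_comm, one_mul, mul_one]
end

section
/- Let θ ∈ ℤ with θ > 3. Then the Diophantine equation x² + θxy + y² = −1 has no integer solutions (x,y) ∈ ℤ². -/
private lemma core16 (θ : ℤ) (hθ : 3 < θ) (n : ℕ)
    (ih : ∀ m, m < n → ∀ x y : ℤ, x.natAbs + y.natAbs = m →
      x ^ 2 + θ * x * y + y ^ 2 ≠ -1)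
    (x y : ℤ) (hn : x.natAbs + y.natAbs = n) (hle : y.natAbs ≤ x.natAbs)
    (heq : x ^ 2 + θ * x * y + y ^ 2 = -1) : False := by
  have hy : y ≠ 0 := by
    rintro rfl
    nlinarith [sq_nonneg x]
  rcases eq_or_lt_of_le hle with hEq | hlt
  · -- |y| = |x| : y = x or y = -x
    have := Int.natAbs_eq_natAbs_iff.mp hEq.symm
    have hx1 : 1 ≤ x ^ 2 := by
      have hx0 : x ≠ 0 := by rintro rfl; simp at hEq; exact hy hEq
      have h1 : x ^ 2 ≠ 0 := pow_ne_zero 2 hx0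
      have h2 : 0 ≤ x ^ 2 := sq_nonneg x
      omega
    rcases this with rfl | rfl
    · nlinarith
    · nlinarith
  · -- strict: descend
    have habs : (y.natAbs : ℤ) < x.natAbs := by exact_mod_cast hlt
    have hya : 1 ≤ (y.natAbs : ℤ) := by
      have : y.natAbs ≠ 0 := fun h => hy (Int.natAbs_eq_zero.mp h)
      omega
    set x' := -θ * y - x with hx'
    have heq' : x' ^ 2 + θ * x' * y + y ^ 2 = -1 := by
      rw [hx']; linear_combination heq
    have hprod : x' * x = y ^ 2 + 1 := by
      rw [hx']; linear_combination -heq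
    have hax : |x| = (x.natAbs : ℤ) := Int.abs_eq_natAbs x
    have hay : |y| = (y.natAbs : ℤ) := Int.abs_eq_natAbs y
    have hy2 : y ^ 2 = |y| ^ 2 := (sq_abs y).symm
    have hlt2 : |x'| * |x| < |x| * |x| := by
      have h1 : |x'| * |x| = y ^ 2 + 1 := by
        rw [← abs_mul, hprod, abs_of_pos]; positivity
      have h2 : |y| + 1 ≤ |x| := by rw [hax, hay]; omega
      have h3 : (2:ℤ) ≤ |x| := by rw [hax, hay] at *; omega
      nlinarith [abs_nonneg y]
    have hlt3 : |x'| < |x| := by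
      have hxpos : 0 < |x| := by rw [hax]; omega
      exact lt_of_mul_lt_mul_right hlt2 (le_of_lt hxpos)
    have hlt4 : x'.natAbs < x.natAbs := by
      rw [Int.abs_eq_natAbs, Int.abs_eq_natAbs] at hlt3
      exact_mod_cast hlt3
    exact ih (x'.natAbs + y.natAbs) (by omega) x' y rfl heq'

theorem stmt16 (θ : ℤ) (hθ : 3 < θ) :
    ¬ ∃ x y : ℤ, x ^ 2 + θ * x * y + y ^ 2 = -1 := by
  rintro ⟨x, y, heq⟩
  have key : ∀ n : ℕ, ∀ x y : ℤ, x.natAbs + y.natAbs = n →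
      x ^ 2 + θ * x * y + y ^ 2 ≠ -1 := by
    intro n
    induction n using Nat.strong_induction_on with
    | _ n ih =>
      intro x y hn heq
      rcases le_total y.natAbs x.natAbs with h | h
      · exact core16 θ hθ n ih x y hn h heq
      · exact core16 θ hθ n ih y x (by omega) h (by linear_combination heq)
  exact key _ x y rfl heq
end
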